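/- There exists a sequence ε_n → 0 such that for all sufficiently large n, E2(n)/E1(n)² = (1+ε_n)·∑_{S=0}^{n} B_n(S)·( f_n(S/n) + p·g(S/n)/((1−p)·(1−d^{−k})·n) )^{r·m}; in particular E2(n)/E1(n)² ≤ (1+ε_n)·∑_{S=0}^{n} Φ_n(S) for all sufficiently large n. -/

import Mathlib

/-!
Write `q_S = C(S,k)/C(n,k)`. The `S`-th summand of `E2/E1²` is `B_n(S) X_S^{rm}` with
`X_S = 1 + (p/(1-p)) (q_S - d^{-k})/(1 - d^{-k})`. Expanding `q_S = ∏_{i<k} (S-i)/(n-i)` to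
second order around `s = S/n` gives `q_S = s^k + g(s)/n + O(k⁴/n²)` uniformly in `S`, so `X_S`
differs by `O(1/n²)` from the base `Y_S` of the claimed sum, and both are at least `1/2` for
large `n`. Hence `X_S^{rm}` and `Y_S^{rm}` agree up to a factor
`exp(O(rm/n²)) = exp(O(log n / n)) → 1`, and `ε_n` is the ratio of the two sums minus one.
The inequality holds because `g ≤ 0` on `[0,1]`.
-/

open Filter Finset

/-- Domain size `d = n^α` of Model RB. -/
noncomputable def dRB (α : ℝ) (n : ℕ) : ℝ := (n : ℝ) ^ α

/-- `m = n · ln d`. -/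
noncomputable def mRB (α : ℝ) (n : ℕ) : ℝ := (n : ℝ) * Real.log (dRB α n)

/-- `f_n(s) = 1 + (p/(1-p)) (s^k - d^{-k})/(1 - d^{-k})`. -/
noncomputable def fRB (α p : ℝ) (k n : ℕ) (s : ℝ) : ℝ :=
  1 + (p / (1 - p)) * (s ^ k - dRB α n ^ (-(k : ℝ))) / (1 - dRB α n ^ (-(k : ℝ)))

/-- `B_n(S) = C(n,S) (1/d)^S (1-1/d)^{n-S}`. -/
noncomputable def BRB (α : ℝ) (n S : ℕ) : ℝ :=
  (n.choose S : ℝ) * (1 / dRB α n) ^ S * (1 - 1 / dRB α n) ^ (n - S)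

/-- `W_n(S) = f_n(S/n)^{r m}`. -/
noncomputable def WRB (α p r : ℝ) (k n S : ℕ) : ℝ :=
  fRB α p k n ((S : ℝ) / (n : ℝ)) ^ (r * mRB α n)

/-- `Φ_n(S) = B_n(S) W_n(S)`. -/
noncomputable def PhiRB (α p r : ℝ) (k n S : ℕ) : ℝ := BRB α n S * WRB α p r k n S

/-- `g(s) = -k(k-1)(1-s)s^{k-1}/2`. -/
noncomputable def gRB (k : ℕ) (s : ℝ) : ℝ :=
  -((k : ℝ) * ((k : ℝ) - 1)) * (1 - s) * s ^ (k - 1) / 2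

/-- `η₁(n) = 1/d + λ/(n^{1-(k-1)α} ln d)`. -/
noncomputable def eta1 (α lam : ℝ) (k n : ℕ) : ℝ :=
  1 / dRB α n + lam / ((n : ℝ) ^ (1 - ((k : ℝ) - 1) * α) * Real.log (dRB α n))

/-- First moment `E[X] = d^n (1-p)^{r m}`. -/
noncomputable def E1RB (α p r : ℝ) (n : ℕ) : ℝ := dRB α n ^ n * (1 - p) ^ (r * mRB α n)

/-- Second moment `E[X²]`. -/
noncomputable def E2RB (α p r : ℝ) (k n : ℕ) : ℝ :=
  ∑ S ∈ Finset.range (n + 1),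
    dRB α n ^ n * (n.choose S : ℝ) * (dRB α n - 1) ^ (n - S) *
      ((1 - p) * ((S.choose k : ℝ) / (n.choose k : ℝ)) +
        ((1 - p) ^ 2 - p * (1 - p) * dRB α n ^ (-(k : ℝ)) / (1 - dRB α n ^ (-(k : ℝ)))) *
          (1 - (S.choose k : ℝ) / (n.choose k : ℝ))) ^ (r * mRB α n)

open Real

theorem Nat.cast_choose_div_cast_choose (S n k : ℕ) :
    (S.choose k : ℝ) / n.choose k = ∏ i ∈ range k, ((S : ℝ) - i) / ((n : ℝ) - i) := by
  rw [Nat.cast_choose_eq_descPochhammer_div, Nat.cast_choose_eq_descPochhammer_div,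
    descPochhammer_eval_eq_prod_range, descPochhammer_eval_eq_prod_range,
    div_div_div_cancel_right₀ (by positivity), prod_div_distrib]

theorem sum_range_natCast_mul_two (k : ℕ) : (∑ i ∈ range k, (i : ℝ)) * 2 = k * (k - 1) := by
  induction k with
  | zero => simp
  | succ k ih => rw [sum_range_succ, add_mul, ih]; push_cast; ring

theorem abs_prod_sub_pow_le {k : ℕ} {a : ℕ → ℝ} {s : ℝ} (ha : ∀ i < k, |a i| ≤ 1)
    (hs : |s| ≤ 1) : |∏ i ∈ range k, a i - s ^ k| ≤ ∑ i ∈ range k, |a i - s| := by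
  induction k with
  | zero => simp
  | succ k ih =>
    have ih := ih fun i hi => ha i (by omega)
    have hsk : |s ^ k| ≤ 1 := by rw [abs_pow]; exact pow_le_one₀ (abs_nonneg s) hs
    rw [prod_range_succ, sum_range_succ, pow_succ]
    calc |(∏ i ∈ range k, a i) * a k - s ^ k * s|
        = |(∏ i ∈ range k, a i - s ^ k) * a k + s ^ k * (a k - s)| := by ring_nf
      _ ≤ |∏ i ∈ range k, a i - s ^ k| * |a k| + |s ^ k| * |a k - s| := by
          rw [← abs_mul, ← abs_mul]; exact abs_add_le _ _
      _ ≤ (∑ i ∈ range k, |a i - s|) * 1 + 1 * |a k - s| := by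
          gcongr
          exact ha k k.lt_succ_self
      _ = _ := by ring

theorem abs_prod_sub_pow_sub_sum_mul_pow_le {k : ℕ} {a : ℕ → ℝ} {s : ℝ}
    (ha : ∀ i < k, |a i| ≤ 1) (hs : |s| ≤ 1) :
    |∏ i ∈ range k, a i - s ^ k - (∑ i ∈ range k, (a i - s)) * s ^ (k - 1)| ≤
      (∑ i ∈ range k, |a i - s|) ^ 2 := by
  induction k with
  | zero => simp
  | succ k ih =>
    rcases k.eq_zero_or_pos with rfl | hk
    · simpa using sq_nonneg (a 0 - s)
    have ha' : ∀ i < k, |a i| ≤ 1 := fun i hi => ha i (by omega)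
    set P := ∏ i ∈ range k, a i
    set B := ∑ i ∈ range k, (a i - s)
    set A := ∑ i ∈ range k, |a i - s|
    have hpow : s ^ k = s * s ^ (k - 1) := by rw [← pow_succ', Nat.sub_add_cancel hk]
    have key : P * a k - s ^ (k + 1) - (B + (a k - s)) * s ^ (k + 1 - 1) =
        s * (P - s ^ k - B * s ^ (k - 1)) + (a k - s) * (P - s ^ k) := by
      rw [Nat.add_sub_cancel, pow_succ, hpow]; ring
    rw [prod_range_succ, sum_range_succ (fun i => a i - s), sum_range_succ, key]
    calc _ ≤ |s| * |P - s ^ k - B * s ^ (k - 1)| + |a k - s| * |P - s ^ k| := by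
          rw [← abs_mul, ← abs_mul]; exact abs_add_le _ _
      _ ≤ 1 * A ^ 2 + |a k - s| * A := by
          gcongr
          · exact ih ha'
          · exact abs_prod_sub_pow_le ha' hs
      _ ≤ (A + |a k - s|) ^ 2 := by
          have : 0 ≤ A := sum_nonneg fun i _ => abs_nonneg _
          nlinarith [abs_nonneg (a k - s)]

section Ratio

variable {x y i : ℝ}

theorem sub_div_sub_sub_div (hy : y ≠ 0) (hyi : y - i ≠ 0) :
    (x - i) / (y - i) - x / y = -(i * (1 - x / y)) / (y - i) := by
  field_simp; ring

theorem abs_sub_div_sub_le_one (hx : 0 ≤ x) (hxy : x ≤ y) (hiy : 2 * i ≤ y)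
    (hy : 0 < y) : |(x - i) / (y - i)| ≤ 1 := by
  rw [abs_div, abs_of_pos (by linarith : 0 < y - i), div_le_one (by linarith), abs_le]
  constructor <;> linarith

theorem abs_sub_div_sub_sub_div_le (hx : 0 ≤ x) (hxy : x ≤ y) (hi : 0 ≤ i) (hiy : 2 * i ≤ y)
    (hy : 0 < y) : |(x - i) / (y - i) - x / y| ≤ 2 * i / y := by
  have hu : 0 ≤ 1 - x / y ∧ 1 - x / y ≤ 1 :=
    ⟨by rw [sub_nonneg, div_le_one hy]; exact hxy, by linarith [div_nonneg hx hy.le]⟩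
  rw [sub_div_sub_sub_div hy.ne' (by linarith), abs_div, abs_neg,
    abs_of_nonneg (mul_nonneg hi hu.1), abs_of_pos (by linarith : 0 < y - i),
    div_le_div_iff₀ (by linarith) hy]
  nlinarith [mul_le_mul_of_nonneg_left hu.2 hi]

theorem abs_sub_div_sub_sub_div_add_le (hx : 0 ≤ x) (hxy : x ≤ y) (hiy : 2 * i ≤ y)
    (hy : 0 < y) :
    |(x - i) / (y - i) - x / y + i * (1 - x / y) / y| ≤ 2 * i ^ 2 / y ^ 2 := by
  have hu : 0 ≤ 1 - x / y ∧ 1 - x / y ≤ 1 :=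
    ⟨by rw [sub_nonneg, div_le_one hy]; exact hxy, by linarith [div_nonneg hx hy.le]⟩
  have hyi : 0 < y - i := by linarith
  have key : (x - i) / (y - i) - x / y + i * (1 - x / y) / y =
      -(i ^ 2 * (1 - x / y) / (y * (y - i))) := by
    rw [sub_div_sub_sub_div hy.ne' hyi.ne']; field_simp; ring
  rw [key, abs_neg, abs_of_nonneg (div_nonneg (mul_nonneg (sq_nonneg i) hu.1) (mul_pos hy hyi).le),
    div_le_div_iff₀ (mul_pos hy hyi) (by positivity)]
  nlinarith [mul_nonneg (sq_nonneg i) (mul_nonneg hy.le (by linarith : 0 ≤ y - 2 * i)),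
    mul_nonneg (mul_nonneg (sq_nonneg i) (sub_nonneg.2 hu.2)) (sq_nonneg y)]

end Ratio

theorem abs_choose_div_choose_sub_pow_sub_gRB_le {k n S : ℕ} (hn : 0 < n) (hkn : 2 * k ≤ n)
    (hS : S ≤ n) :
    |(S.choose k : ℝ) / n.choose k - ((S : ℝ) / n) ^ k - gRB k ((S : ℝ) / n) / n| ≤
      6 * k ^ 4 / n ^ 2 := by
  set s : ℝ := (S : ℝ) / n
  set a : ℕ → ℝ := fun i => ((S : ℝ) - i) / ((n : ℝ) - i)
  have hn' : (0 : ℝ) < n := by exact_mod_cast hn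
  have hS' : (S : ℝ) ≤ n := by exact_mod_cast hS
  have hik : ∀ i ∈ range k, 2 * (i : ℝ) ≤ n := fun i hi => by
    have := mem_range.1 hi
    exact_mod_cast (by omega : 2 * i ≤ n)
  have ha : ∀ i < k, |a i| ≤ 1 := fun i hi =>
    abs_sub_div_sub_le_one S.cast_nonneg hS' (hik i (mem_range.2 hi)) hn'
  have hs : |s| ≤ 1 := by
    rw [abs_of_nonneg (by positivity), div_le_one hn']; exact hS'
  have hfirst : ∑ i ∈ range k, |a i - s| ≤ 2 * k ^ 2 / n := by
    calc ∑ i ∈ range k, |a i - s| ≤ ∑ _i ∈ range k, 2 * (k : ℝ) / n := by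
          refine sum_le_sum fun i hi => (abs_sub_div_sub_sub_div_le S.cast_nonneg hS'
            i.cast_nonneg (hik i hi) hn').trans ?_
          gcongr; exact_mod_cast (mem_range.1 hi).le
      _ = 2 * k ^ 2 / n := by rw [sum_const, card_range, nsmul_eq_mul]; ring
  have hg : gRB k s / n = -((∑ i ∈ range k, (i : ℝ) * (1 - s) / n) * s ^ (k - 1)) := by
    rw [← sum_div, ← sum_mul, gRB]
    linear_combination ((1 - s) * s ^ (k - 1) / (2 * n)) * sum_range_natCast_mul_two k
  have hcorr :
      |(∑ i ∈ range k, (a i - s)) * s ^ (k - 1) - gRB k s / n| ≤ 2 * k ^ 3 / n ^ 2 := by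
    rw [hg, sub_neg_eq_add, ← add_mul, ← sum_add_distrib, abs_mul, abs_pow]
    calc |∑ i ∈ range k, (a i - s + i * (1 - s) / n)| * |s| ^ (k - 1)
        ≤ (∑ _i ∈ range k, 2 * (k : ℝ) ^ 2 / n ^ 2) * 1 := by
          gcongr
          · refine (abs_sum_le_sum_abs _ _).trans (sum_le_sum fun i hi =>
              (abs_sub_div_sub_sub_div_add_le S.cast_nonneg hS' (hik i hi) hn').trans ?_)
            gcongr; exact_mod_cast (mem_range.1 hi).le
          · exact pow_le_one₀ (abs_nonneg s) hs
      _ = 2 * k ^ 3 / n ^ 2 := by rw [sum_const, card_range, nsmul_eq_mul]; ring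
  have hk34 : (k : ℝ) ^ 3 ≤ k ^ 4 := by
    rcases k.eq_zero_or_pos with rfl | hk
    · simp
    · exact pow_le_pow_right₀ (by exact_mod_cast hk) (by norm_num)
  rw [Nat.cast_choose_div_cast_choose]
  calc |∏ i ∈ range k, a i - s ^ k - gRB k s / n|
      ≤ |∏ i ∈ range k, a i - s ^ k - (∑ i ∈ range k, (a i - s)) * s ^ (k - 1)| +
          |(∑ i ∈ range k, (a i - s)) * s ^ (k - 1) - gRB k s / n| := abs_sub_le _ _ _
    _ ≤ (2 * k ^ 2 / n) ^ 2 + 2 * k ^ 3 / n ^ 2 := by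
        gcongr
        exact (abs_prod_sub_pow_sub_sum_mul_pow_le ha hs).trans (by gcongr)
    _ ≤ 6 * k ^ 4 / n ^ 2 := by rw [div_pow, ← add_div]; gcongr; nlinarith

theorem le_mul_exp_of_abs_sub_le {x y e : ℝ} (hy : 1 / 2 ≤ y) (h : |x - y| ≤ e) :
    x ≤ y * exp (2 * e) := by
  have he : 0 ≤ e := (abs_nonneg _).trans h
  calc x ≤ y * (1 + 2 * e) := by nlinarith [(abs_le.1 h).2]
    _ ≤ y * exp (2 * e) := by gcongr; linarith [add_one_le_exp (2 * e)]

theorem rpow_le_exp_mul_rpow_of_abs_sub_le {x y e t : ℝ} (hx : 0 ≤ x) (hy : 1 / 2 ≤ y)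
    (h : |x - y| ≤ e) (ht : 0 ≤ t) : x ^ t ≤ exp (2 * e * t) * y ^ t := by
  calc x ^ t ≤ (y * exp (2 * e)) ^ t := rpow_le_rpow hx (le_mul_exp_of_abs_sub_le hy h) ht
    _ = exp (2 * e * t) * y ^ t := by
      rw [mul_rpow (by linarith) (exp_pos _).le, ← exp_mul, mul_comm]

theorem sum_mul_rpow_le_exp_mul_sum {ι : Type*} {s : Finset ι} {w x y : ι → ℝ} {e t : ℝ}
    (hw : ∀ i ∈ s, 0 ≤ w i) (hx : ∀ i ∈ s, 0 ≤ x i) (hy : ∀ i ∈ s, 1 / 2 ≤ y i)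
    (hxy : ∀ i ∈ s, |x i - y i| ≤ e) (ht : 0 ≤ t) :
    ∑ i ∈ s, w i * x i ^ t ≤ exp (2 * e * t) * ∑ i ∈ s, w i * y i ^ t := by
  rw [mul_sum]
  refine sum_le_sum fun i hi => ?_
  rw [mul_left_comm]
  exact mul_le_mul_of_nonneg_left
    (rpow_le_exp_mul_rpow_of_abs_sub_le (hx i hi) (hy i hi) (hxy i hi) ht) (hw i hi)

theorem tendsto_div_nhds_one_of_le_exp_mul {ι : Type*} {l : Filter ι} {x y w : ι → ℝ}
    (hw : Tendsto w l (nhds 0)) (hy : ∀ᶠ i in l, 0 < y i)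
    (hxy : ∀ᶠ i in l, x i ≤ exp (w i) * y i) (hyx : ∀ᶠ i in l, y i ≤ exp (w i) * x i) :
    Tendsto (fun i => x i / y i) l (nhds 1) := by
  have hexp {v : ι → ℝ} (hv : Tendsto v l (nhds 0)) :
      Tendsto (fun i => exp (v i)) l (nhds 1) :=
    tendsto_exp_nhds_zero_nhds_one.comp hv
  refine tendsto_of_tendsto_of_tendsto_of_le_of_le' (hexp (by simpa using hw.neg)) (hexp hw) ?_ ?_
  · filter_upwards [hy, hyx] with i hyi hyxi
    rw [exp_neg, inv_le_iff_one_le_mul₀ (exp_pos _), div_mul_eq_mul_div, le_div_iff₀ hyi,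
      one_mul, mul_comm]
    exact hyxi
  · filter_upwards [hy, hxy] with i hyi hxyi
    rw [div_le_iff₀ hyi]
    exact hxyi

section ModelRB

theorem one_half_le_one_add_mul_div {c u a t : ℝ} (hc : 0 < c) (ht : 1 / 2 ≤ t) (hu : -a ≤ u)
    (hca : c * a ≤ 1 / 4) : 1 / 2 ≤ 1 + c * u / t := by
  have : -(t / 2) ≤ c * u := by nlinarith
  have : -(1 / 2) ≤ c * u / t := by rw [le_div_iff₀ (by linarith)]; linarith
  linarith

theorem rpow_neg_natCast_le_half {x : ℝ} {k : ℕ} (hx : 2 ≤ x) (hk : 1 ≤ k) :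
    x ^ (-(k : ℝ)) ≤ 1 / 2 := by
  rw [rpow_neg (by linarith), rpow_natCast, one_div]
  exact inv_anti₀ two_pos (hx.trans (le_self_pow₀ (by linarith) (by omega)))

theorem gRB_nonpos (k : ℕ) {s : ℝ} (hs0 : 0 ≤ s) (hs1 : s ≤ 1) : gRB k s ≤ 0 := by
  have hk : 0 ≤ (k : ℝ) * (k - 1) := by
    rcases k with _ | k
    · simp
    · push_cast; nlinarith
  have := mul_nonneg (mul_nonneg hk (sub_nonneg.2 hs1)) (pow_nonneg hs0 (k - 1))
  rw [gRB]; linarith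

theorem neg_sq_div_two_le_gRB (k : ℕ) {s : ℝ} (hs0 : 0 ≤ s) (hs1 : s ≤ 1) :
    -((k : ℝ) ^ 2 / 2) ≤ gRB k s := by
  have h1 : (1 - s) * s ^ (k - 1) ≤ 1 :=
    mul_le_one₀ (by linarith) (pow_nonneg hs0 _) (pow_le_one₀ hs0 hs1)
  have h0 : 0 ≤ (1 - s) * s ^ (k - 1) := mul_nonneg (by linarith) (pow_nonneg hs0 _)
  have hk : (0 : ℝ) ≤ k := k.cast_nonneg
  rw [gRB]
  nlinarith [mul_le_mul_of_nonneg_left h1 hk, mul_nonneg hk h0]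

noncomputable def exactBaseRB (α p : ℝ) (k n S : ℕ) : ℝ :=
  1 + p / (1 - p) * ((S.choose k : ℝ) / n.choose k - dRB α n ^ (-(k : ℝ))) /
    (1 - dRB α n ^ (-(k : ℝ)))

noncomputable def approxBaseRB (α p : ℝ) (k n S : ℕ) : ℝ :=
  fRB α p k n ((S : ℝ) / n) +
    p * gRB k ((S : ℝ) / n) / ((1 - p) * (1 - dRB α n ^ (-(k : ℝ))) * n)

noncomputable def exactSumRB (α p r : ℝ) (k n : ℕ) : ℝ :=
  ∑ S ∈ range (n + 1), BRB α n S * exactBaseRB α p k n S ^ (r * mRB α n)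

noncomputable def approxSumRB (α p r : ℝ) (k n : ℕ) : ℝ :=
  ∑ S ∈ range (n + 1), BRB α n S * approxBaseRB α p k n S ^ (r * mRB α n)

variable {α p r : ℝ} {k n S : ℕ}

theorem approxBaseRB_eq (hn : 0 < n) (hp1 : p < 1) (hδ : dRB α n ^ (-(k : ℝ)) < 1) :
    approxBaseRB α p k n S = 1 + p / (1 - p) *
      (((S : ℝ) / n) ^ k + gRB k ((S : ℝ) / n) / n - dRB α n ^ (-(k : ℝ))) /
        (1 - dRB α n ^ (-(k : ℝ))) := by
  have : (n : ℝ) ≠ 0 := by positivity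
  have : 1 - p ≠ 0 := by linarith
  have : 1 - dRB α n ^ (-(k : ℝ)) ≠ 0 := by linarith
  rw [approxBaseRB, fRB]
  field_simp
  ring

theorem one_half_le_exactBaseRB (hp0 : 0 < p) (hp1 : p < 1)
    (hδ : dRB α n ^ (-(k : ℝ)) ≤ 1 / 2)
    (hsmall : p / (1 - p) * dRB α n ^ (-(k : ℝ)) ≤ 1 / 4) : 1 / 2 ≤ exactBaseRB α p k n S :=
  one_half_le_one_add_mul_div (div_pos hp0 (by linarith)) (by linarith)
    (by linarith [show (0 : ℝ) ≤ S.choose k / n.choose k by positivity]) hsmall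

theorem one_half_le_approxBaseRB (hn : 0 < n) (hS : S ≤ n) (hp0 : 0 < p) (hp1 : p < 1)
    (hδ : dRB α n ^ (-(k : ℝ)) ≤ 1 / 2)
    (hsmall : p / (1 - p) * (dRB α n ^ (-(k : ℝ)) + k ^ 2 / (2 * n)) ≤ 1 / 4) :
    1 / 2 ≤ approxBaseRB α p k n S := by
  have hn' : (0 : ℝ) < n := by exact_mod_cast hn
  have hs0 : 0 ≤ (S : ℝ) / n := by positivity
  have hs1 : (S : ℝ) / n ≤ 1 := by rw [div_le_one hn']; exact_mod_cast hS
  have hg : -((k : ℝ) ^ 2 / (2 * n)) ≤ gRB k ((S : ℝ) / n) / n := by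
    rw [le_div_iff₀ hn', neg_mul, div_mul_eq_mul_div, mul_div_mul_right _ _ hn'.ne']
    exact neg_sq_div_two_le_gRB k hs0 hs1
  rw [approxBaseRB_eq hn hp1 (by linarith)]
  exact one_half_le_one_add_mul_div (div_pos hp0 (by linarith)) (by linarith)
    (by nlinarith [pow_nonneg hs0 k]) hsmall

theorem abs_exactBaseRB_sub_approxBaseRB_le (hkn : 2 * k ≤ n) (hn : 0 < n) (hS : S ≤ n)
    (hp0 : 0 < p) (hp1 : p < 1) (hδ : dRB α n ^ (-(k : ℝ)) ≤ 1 / 2) :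
    |exactBaseRB α p k n S - approxBaseRB α p k n S| ≤ 12 * (p / (1 - p)) * k ^ 4 / n ^ 2 := by
  have hc : 0 < p / (1 - p) := div_pos hp0 (by linarith)
  have ht : 0 < 1 - dRB α n ^ (-(k : ℝ)) := by linarith
  have key : exactBaseRB α p k n S - approxBaseRB α p k n S = p / (1 - p) *
      ((S.choose k : ℝ) / n.choose k - ((S : ℝ) / n) ^ k - gRB k ((S : ℝ) / n) / n) /
        (1 - dRB α n ^ (-(k : ℝ))) := by
    rw [approxBaseRB_eq hn hp1 (by linarith), exactBaseRB]; ring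
  rw [key, abs_div, abs_mul, abs_of_pos hc, abs_of_pos ht, div_le_iff₀ ht]
  calc p / (1 - p) * |(S.choose k : ℝ) / n.choose k - ((S : ℝ) / n) ^ k - gRB k (S / n) / n|
      ≤ p / (1 - p) * (6 * k ^ 4 / n ^ 2) := by
        gcongr; exact abs_choose_div_choose_sub_pow_sub_gRB_le hn hkn hS
    _ ≤ 12 * (p / (1 - p)) * k ^ 4 / n ^ 2 * (1 - dRB α n ^ (-(k : ℝ))) := by
        have : 0 ≤ p / (1 - p) * (k ^ 4 / n ^ 2) := by positivity
        rw [mul_div_assoc, mul_div_assoc]; nlinarith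

end ModelRB

section ModelRBSums

structure IsLargeRB (α p : ℝ) (k n : ℕ) : Prop where
  two_mul_le : 2 * k ≤ n
  two_le_d : 2 ≤ dRB α n
  small : p / (1 - p) * (dRB α n ^ (-(k : ℝ)) + k ^ 2 / (2 * n)) ≤ 1 / 4

variable {α p r : ℝ} {k n : ℕ}

theorem BRB_nonneg (hd : 1 ≤ dRB α n) (S : ℕ) : 0 ≤ BRB α n S := by
  have : 0 ≤ 1 - 1 / dRB α n := by rw [sub_nonneg, div_le_one (by linarith)]; exact hd
  rw [BRB]
  positivity

theorem BRB_eq (hd : dRB α n ≠ 0) {S : ℕ} (hS : S ≤ n) :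
    BRB α n S = n.choose S * (dRB α n - 1) ^ (n - S) / dRB α n ^ n := by
  rw [BRB, one_sub_div hd, div_pow, div_pow, one_pow, ← pow_sub_mul_pow (dRB α n) hS]
  field_simp

theorem mRB_nonneg (hd : 1 ≤ dRB α n) : 0 ≤ mRB α n :=
  mul_nonneg n.cast_nonneg (log_nonneg hd)

namespace IsLargeRB

theorem pos (h : IsLargeRB α p k n) (hk : 1 ≤ k) : 0 < n := by have := h.two_mul_le; omega

theorem rpow_le_half (h : IsLargeRB α p k n) (hk : 1 ≤ k) : dRB α n ^ (-(k : ℝ)) ≤ 1 / 2 :=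
  rpow_neg_natCast_le_half h.two_le_d hk

theorem one_half_le_exactBaseRB (h : IsLargeRB α p k n) (hk : 1 ≤ k) (hp0 : 0 < p) (hp1 : p < 1)
    (S : ℕ) :
    1 / 2 ≤ exactBaseRB α p k n S := by
  refine _root_.one_half_le_exactBaseRB hp0 hp1 (h.rpow_le_half hk) (le_trans ?_ h.small)
  have : 0 ≤ (k : ℝ) ^ 2 / (2 * n) := by positivity
  have : 0 < p / (1 - p) := div_pos hp0 (by linarith)
  nlinarith

theorem one_half_le_approxBaseRB (h : IsLargeRB α p k n) (hk : 1 ≤ k) (hp0 : 0 < p) (hp1 : p < 1)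
    {S : ℕ} (hS : S ≤ n) : 1 / 2 ≤ approxBaseRB α p k n S :=
  _root_.one_half_le_approxBaseRB (h.pos hk) hS hp0 hp1 (h.rpow_le_half hk) h.small

theorem E2RB_div_E1RB_sq (h : IsLargeRB α p k n) (hk : 1 ≤ k) (hp0 : 0 < p) (hp1 : p < 1) :
    E2RB α p r k n / E1RB α p r n ^ 2 = exactSumRB α p r k n := by
  have hd : 0 < dRB α n := by linarith [h.two_le_d]
  have hδ := h.rpow_le_half hk
  rw [E2RB, exactSumRB, sum_div]
  refine sum_congr rfl fun S hS => ?_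
  have hbase : (1 - p) * ((S.choose k : ℝ) / n.choose k) +
      ((1 - p) ^ 2 - p * (1 - p) * dRB α n ^ (-(k : ℝ)) / (1 - dRB α n ^ (-(k : ℝ)))) *
        (1 - (S.choose k : ℝ) / n.choose k) = (1 - p) ^ 2 * exactBaseRB α p k n S := by
    have : 1 - p ≠ 0 := by linarith
    have : 1 - dRB α n ^ (-(k : ℝ)) ≠ 0 := by linarith
    rw [exactBaseRB]; field_simp; ring
  have : 0 < (1 - p) ^ (r * mRB α n) := rpow_pos_of_pos (by linarith) _
  rw [hbase, mul_rpow (by positivity) (by linarith [h.one_half_le_exactBaseRB hk hp0 hp1 S]),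
    ← rpow_pow_comm (by linarith),
    E1RB, BRB_eq hd.ne' (mem_range_succ_iff.1 hS)]
  field_simp

theorem approxSumRB_pos (h : IsLargeRB α p k n) (hk : 1 ≤ k) (hp0 : 0 < p) (hp1 : p < 1) :
    0 < approxSumRB α p r k n := by
  have hd := h.two_le_d
  refine sum_pos' (fun S hS => mul_nonneg (BRB_nonneg (by linarith) S) (rpow_nonneg (by
    linarith [h.one_half_le_approxBaseRB hk hp0 hp1 (mem_range_succ_iff.1 hS)]) _))
    ⟨0, mem_range.2 n.succ_pos, mul_pos ?_ (rpow_pos_of_pos (by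
      linarith [h.one_half_le_approxBaseRB hk hp0 hp1 n.zero_le]) _)⟩
  have : 1 / dRB α n < 1 := by rw [div_lt_one (by linarith)]; linarith
  rw [BRB]
  simpa using pow_pos (by linarith : 0 < 1 - 1 / dRB α n) n

theorem exactSumRB_le (h : IsLargeRB α p k n) (hk : 1 ≤ k) (hp0 : 0 < p) (hp1 : p < 1)
    (hr : 0 ≤ r) :
    exactSumRB α p r k n ≤
      exp (24 * (p / (1 - p)) * k ^ 4 * r / n ^ 2 * mRB α n) * approxSumRB α p r k n := by
  have hd := h.two_le_d
  refine (sum_mul_rpow_le_exp_mul_sum (fun S _ => BRB_nonneg (by linarith) S)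
    (fun S _ => by linarith [h.one_half_le_exactBaseRB hk hp0 hp1 S])
    (fun S hS => h.one_half_le_approxBaseRB hk hp0 hp1 (mem_range_succ_iff.1 hS))
    (fun S hS => abs_exactBaseRB_sub_approxBaseRB_le h.two_mul_le (h.pos hk)
      (mem_range_succ_iff.1 hS) hp0 hp1 (h.rpow_le_half hk))
    (mul_nonneg hr (mRB_nonneg (by linarith)))).trans_eq (by congr 2; ring)

theorem approxSumRB_le (h : IsLargeRB α p k n) (hk : 1 ≤ k) (hp0 : 0 < p) (hp1 : p < 1)
    (hr : 0 ≤ r) :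
    approxSumRB α p r k n ≤
      exp (24 * (p / (1 - p)) * k ^ 4 * r / n ^ 2 * mRB α n) * exactSumRB α p r k n := by
  have hd := h.two_le_d
  refine (sum_mul_rpow_le_exp_mul_sum (fun S _ => BRB_nonneg (by linarith) S)
    (fun S hS => by linarith [h.one_half_le_approxBaseRB hk hp0 hp1 (mem_range_succ_iff.1 hS)])
    (fun S _ => h.one_half_le_exactBaseRB hk hp0 hp1 S)
    (fun S hS => by
      rw [abs_sub_comm]
      exact abs_exactBaseRB_sub_approxBaseRB_le h.two_mul_le (h.pos hk)
        (mem_range_succ_iff.1 hS) hp0 hp1 (h.rpow_le_half hk))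
    (mul_nonneg hr (mRB_nonneg (by linarith)))).trans_eq (by congr 2; ring)

theorem approxSumRB_le_sum_PhiRB (h : IsLargeRB α p k n) (hk : 1 ≤ k) (hp0 : 0 < p) (hp1 : p < 1)
    (hr : 0 ≤ r) :
    approxSumRB α p r k n ≤ ∑ S ∈ range (n + 1), PhiRB α p r k n S := by
  have hd := h.two_le_d
  have hn : (0 : ℝ) < n := by exact_mod_cast h.pos hk
  refine sum_le_sum fun S hS => mul_le_mul_of_nonneg_left ?_ (BRB_nonneg (by linarith) S)
  have hS' := mem_range_succ_iff.1 hS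
  refine rpow_le_rpow (by linarith [h.one_half_le_approxBaseRB hk hp0 hp1 hS'])
    ?_ (mul_nonneg hr (mRB_nonneg (by linarith)))
  have hg := gRB_nonpos k (s := (S : ℝ) / n) (by positivity)
    (by rw [div_le_one hn]; exact_mod_cast hS')
  have : 0 < (1 - p) * (1 - dRB α n ^ (-(k : ℝ))) * n :=
    mul_pos (mul_pos (by linarith) (by linarith [h.rpow_le_half hk])) hn
  rw [approxBaseRB]
  linarith [div_nonpos_of_nonpos_of_nonneg (mul_nonpos_of_nonneg_of_nonpos hp0.le hg) this.le]

end IsLargeRB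

end ModelRBSums

theorem tendsto_dRB_atTop {α : ℝ} (hα : 0 < α) : Tendsto (dRB α) atTop atTop :=
  (tendsto_rpow_atTop hα).comp tendsto_natCast_atTop_atTop

theorem eventually_isLargeRB {α : ℝ} {k : ℕ} (hα : 0 < α) (hk : 1 ≤ k) (p : ℝ) :
    ∀ᶠ n in atTop, IsLargeRB α p k n := by
  have hδ : Tendsto (fun n => dRB α n ^ (-(k : ℝ))) atTop (nhds 0) :=
    (tendsto_rpow_neg_atTop (by exact_mod_cast hk)).comp (tendsto_dRB_atTop hα)
  have hsmall : Tendsto (fun n : ℕ => p / (1 - p) * (dRB α n ^ (-(k : ℝ)) + k ^ 2 / (2 * n)))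
      atTop (nhds 0) := by
    have : Tendsto (fun n : ℕ => (k : ℝ) ^ 2 / (2 * n)) atTop (nhds 0) := by
      simpa [div_mul_eq_div_div] using tendsto_const_div_atTop_nhds_zero_nat ((k : ℝ) ^ 2 / 2)
    simpa using (hδ.add this).const_mul (p / (1 - p))
  filter_upwards [eventually_ge_atTop (2 * k), (tendsto_dRB_atTop hα).eventually_ge_atTop 2,
    hsmall.eventually (ge_mem_nhds (by norm_num : (0 : ℝ) < 1 / 4))] with n hn hd hs
  exact ⟨hn, hd, hs⟩

theorem tendsto_div_sq_mul_mRB (α C : ℝ) :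
    Tendsto (fun n : ℕ => C / n ^ 2 * mRB α n) atTop (nhds 0) := by
  have hlog : Tendsto (fun n : ℕ => log n / n) atTop (nhds 0) :=
    isLittleO_log_id_atTop.tendsto_div_nhds_zero.comp tendsto_natCast_atTop_atTop
  have := hlog.const_mul (C * α)
  rw [mul_zero] at this
  refine this.congr' ?_
  filter_upwards [eventually_gt_atTop 0] with n hn
  have : (0 : ℝ) < n := by exact_mod_cast hn
  rw [mRB, dRB, log_rpow this]
  field_simp

theorem stmt3_general (α p r : ℝ) (k : ℕ) (hα : 0 < α) (hk : 2 ≤ k)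
    (hp0 : 0 < p) (hp1 : p < 1) (hr0 : 0 < r) :
    ∃ ε : ℕ → ℝ, Filter.Tendsto ε Filter.atTop (nhds 0) ∧
      ∀ᶠ n : ℕ in Filter.atTop,
        E2RB α p r k n / E1RB α p r n ^ 2 =
          (1 + ε n) * ∑ S ∈ Finset.range (n + 1),
            BRB α n S *
              (fRB α p k n ((S : ℝ) / n) +
                p * gRB k ((S : ℝ) / n) /
                  ((1 - p) * (1 - dRB α n ^ (-(k : ℝ))) * n)) ^ (r * mRB α n) ∧
        E2RB α p r k n / E1RB α p r n ^ 2 ≤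
          (1 + ε n) * ∑ S ∈ Finset.range (n + 1), PhiRB α p r k n S := by
  have hk1 : 1 ≤ k := by omega
  have hlarge := eventually_isLargeRB hα hk1 p
  have hY : ∀ᶠ n in atTop, 0 < approxSumRB α p r k n :=
    hlarge.mono fun n h => h.approxSumRB_pos hk1 hp0 hp1
  refine ⟨fun n => E2RB α p r k n / E1RB α p r n ^ 2 / approxSumRB α p r k n - 1, ?_, ?_⟩
  · have hratio := tendsto_div_nhds_one_of_le_exp_mul
      (x := fun n => E2RB α p r k n / E1RB α p r n ^ 2)
      (tendsto_div_sq_mul_mRB α (24 * (p / (1 - p)) * k ^ 4 * r)) hY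
      (hlarge.mono fun n h => by
        rw [h.E2RB_div_E1RB_sq hk1 hp0 hp1]; exact h.exactSumRB_le hk1 hp0 hp1 hr0.le)
      (hlarge.mono fun n h => by
        rw [h.E2RB_div_E1RB_sq hk1 hp0 hp1]; exact h.approxSumRB_le hk1 hp0 hp1 hr0.le)
    simpa using hratio.sub_const 1
  · filter_upwards [hlarge, hY] with n h hYn
    have hE : 0 < E2RB α p r k n / E1RB α p r n ^ 2 := by
      rw [h.E2RB_div_E1RB_sq hk1 hp0 hp1]
      exact pos_of_mul_pos_right (hYn.trans_le (h.approxSumRB_le hk1 hp0 hp1 hr0.le))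
        (exp_pos _).le
    rw [add_sub_cancel]
    refine ⟨(div_mul_cancel₀ _ hYn.ne').symm, ?_⟩
    rw [div_mul_eq_mul_div, le_div_iff₀ hYn]
    exact mul_le_mul_of_nonneg_left (h.approxSumRB_le_sum_PhiRB hk1 hp0 hp1 hr0.le) hE.le

/-- there is ε_n → 0 with, for all large n,
E[X²]/E[X]² = (1+ε_n) ∑_S B_n(S) (f_n(S/n) + p g(S/n)/((1-p)(1-d^{-k})n))^{rm},
and in particular E[X²]/E[X]² ≤ (1+ε_n) ∑_S Φ_n(S). -/
theorem stmt3 (α p r τ : ℝ) (k : ℕ) (hα : 0 < α) (hk : 2 ≤ k)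
    (hp0 : 0 < p) (hp1 : p < 1) (hτ : τ = 1 / (1 - p)) (hr0 : 0 < r) :
    ∃ ε : ℕ → ℝ, Filter.Tendsto ε Filter.atTop (nhds 0) ∧
      ∀ᶠ n : ℕ in Filter.atTop,
        E2RB α p r k n / E1RB α p r n ^ 2 =
          (1 + ε n) * ∑ S ∈ Finset.range (n + 1),
            BRB α n S *
              (fRB α p k n ((S : ℝ) / n) +
                p * gRB k ((S : ℝ) / n) /
                  ((1 - p) * (1 - dRB α n ^ (-(k : ℝ))) * n)) ^ (r * mRB α n) ∧
        E2RB α p r k n / E1RB α p r n ^ 2 ≤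
          (1 + ε n) * ∑ S ∈ Finset.range (n + 1), PhiRB α p r k n S :=
  stmt3_general α p r k hα hk hp0 hp1 hr0
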